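/- Let f and g be holomorphic on a neighborhood of the closed unit disc. Then the rank-one operator f⊗g belongs to 𝔇 and Δ̃(f⊗g) = (f′⊗g′) + ((z²f)′⊗(z²g)′) − 2·((zf)′⊗(zg)′), where z denotes the identity function on 𝔻 and primes denote complex derivatives. -/

import Mathlib

open MeasureTheory Complex Metric Filter
open scoped ENNReal

noncomputable section

namespace Bergman

/-- The open unit disc in `ℂ`. -/
def unitDisc : Set ℂ := Metric.ball (0 : ℂ) 1

/-- The normalized area measure `dA` on the unit disc. -/
def dA : Measure ℂ := (ENNReal.ofReal Real.pi)⁻¹ • (volume.restrict unitDisc)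

instance : IsFiniteMeasure dA := by
  constructor
  rw [dA, Measure.smul_apply, smul_eq_mul]
  exact ENNReal.mul_lt_top
    (ENNReal.inv_lt_top.2 (by simp [Real.pi_pos]))
    (by simp [unitDisc, Measure.restrict_apply, measure_ball_lt_top])

/-- Membership in the Bergman space: admitting a holomorphic representative. -/
def IsBerg (f : Lp ℂ 2 dA) : Prop :=
  ∃ g : ℂ → ℂ, DifferentiableOn ℂ g unitDisc ∧ (↑↑f : ℂ → ℂ) =ᵐ[dA] g

lemma isBerg_zero : IsBerg 0 := ⟨0, differentiableOn_const 0, Lp.coeFn_zero ℂ 2 dA⟩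

lemma isBerg_add {f₁ f₂ : Lp ℂ 2 dA} (h₁ : IsBerg f₁) (h₂ : IsBerg f₂) : IsBerg (f₁ + f₂) := by
  obtain ⟨g₁, hg₁, he₁⟩ := h₁
  obtain ⟨g₂, hg₂, he₂⟩ := h₂
  exact ⟨g₁ + g₂, hg₁.add hg₂, (Lp.coeFn_add f₁ f₂).trans (he₁.add he₂)⟩

lemma isBerg_smul (c : ℂ) {f : Lp ℂ 2 dA} (h : IsBerg f) : IsBerg (c • f) := by
  obtain ⟨g, hg, he⟩ := h
  exact ⟨c • g, hg.const_smul c, (Lp.coeFn_smul c f).trans (he.const_smul c)⟩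

/-- The Bergman space `A²` as a subspace of `L²(𝔻, dA)`. -/
def bergman : Submodule ℂ (Lp ℂ 2 dA) where
  carrier := {f | IsBerg f}
  add_mem' := fun h₁ h₂ => isBerg_add h₁ h₂
  zero_mem' := isBerg_zero
  smul_mem' := fun c _ h => isBerg_smul c h

/-- The Bergman space. -/
abbrev A2 := ↥bergman

/-- The inner product, in the convention of the paper: `pin f g = ⟨f, g⟩` is linear
in `f` and conjugate linear in `g`. -/
def pin (f g : A2) : ℂ := inner (𝕜 := ℂ) g f

/-- The rank one operator `f ⊗ g : h ↦ ⟨h, g⟩ f`. -/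
def rankOne (f g : A2) : A2 →L[ℂ] A2 := (innerSL ℂ g).smulRight f

/-- The Möbius involution `φ_z` interchanging `0` and `z`. -/
def mobius (z w : ℂ) : ℂ := (z - w) / (1 - (starRingEnd ℂ) z * w)

/-- The derivative `φ_z'`. -/
def mderiv (z w : ℂ) : ℂ := -(1 - ((‖z‖ : ℝ) : ℂ) ^ 2) / (1 - (starRingEnd ℂ) z * w) ^ 2

/-- The function `U_z e_k = (e_k ∘ φ_z) ⬝ φ_z'`. -/
def UekFun (k : ℕ) (z : ℂ) : ℂ → ℂ :=
  fun w => (Real.sqrt (k + 1) : ℂ) * (mobius z w) ^ k * mderiv z w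

lemma denom_ne {z : ℂ} (hz : ‖z‖ < 1) {w : ℂ}
    (hw : w ∈ Metric.closedBall (0 : ℂ) 1) : (1 : ℂ) - (starRingEnd ℂ) z * w ≠ 0 := by
  intro h
  have hw1 : ‖w‖ ≤ 1 := by simpa [Complex.dist_eq] using hw
  have h1 : (starRingEnd ℂ) z * w = 1 := (sub_eq_zero.mp h).symm
  have h2 : ‖(starRingEnd ℂ) z * w‖ < 1 := by
    rw [norm_mul, Complex.norm_conj]
    calc ‖z‖ * ‖w‖ ≤ ‖z‖ * 1 :=
          mul_le_mul_of_nonneg_left hw1 (norm_nonneg z)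
      _ = ‖z‖ := mul_one _
      _ < 1 := hz
  rw [h1] at h2; simp at h2

lemma uekFun_contOn (k : ℕ) {z : ℂ} (hz : ‖z‖ < 1) :
    ContinuousOn (UekFun k z) (Metric.closedBall (0 : ℂ) 1) := by
  have hden : ContinuousOn (fun w : ℂ => (1 : ℂ) - (starRingEnd ℂ) z * w)
      (Metric.closedBall (0 : ℂ) 1) :=
    continuousOn_const.sub (continuousOn_const.mul continuousOn_id)
  refine ContinuousOn.mul (ContinuousOn.mul continuousOn_const ?_) ?_
  · exact ((continuousOn_const.sub continuousOn_id).div hden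
      (fun w hw => denom_ne hz hw)).pow k
  · exact continuousOn_const.div (hden.pow 2)
      (fun w hw => pow_ne_zero 2 (denom_ne hz hw))

lemma uekFun_diffOn (k : ℕ) {z : ℂ} (hz : ‖z‖ < 1) :
    DifferentiableOn ℂ (UekFun k z) unitDisc := by
  have hsub : unitDisc ⊆ Metric.closedBall (0 : ℂ) 1 := ball_subset_closedBall
  have hden : DifferentiableOn ℂ (fun w : ℂ => (1 : ℂ) - (starRingEnd ℂ) z * w) unitDisc :=
    (differentiableOn_const _).sub ((differentiableOn_const _).mul differentiableOn_id)
  refine DifferentiableOn.mul (DifferentiableOn.mul (differentiableOn_const _) ?_) ?_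
  · exact (((differentiableOn_const _).sub differentiableOn_id).div hden
      (fun w hw => denom_ne hz (hsub hw))).pow k
  · exact (differentiableOn_const _).div (hden.pow 2)
      (fun w hw => pow_ne_zero 2 (denom_ne hz (hsub hw)))

lemma ae_mem_unitDisc : ∀ᵐ w ∂dA, w ∈ unitDisc := by
  rw [dA]
  exact Measure.ae_smul_measure (ae_restrict_mem measurableSet_ball) _

lemma memLp_of_contOn {f : ℂ → ℂ}
    (hc : ContinuousOn f (Metric.closedBall (0 : ℂ) 1)) : MemLp f 2 dA := by
  obtain ⟨C, hC⟩ := (isCompact_closedBall (0 : ℂ) 1).exists_bound_of_continuousOn hc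
  have hmeas : AEStronglyMeasurable f dA := by
    rw [dA]
    exact ((hc.mono ball_subset_closedBall).aestronglyMeasurable
      measurableSet_ball).smul_measure _
  refine MemLp.of_bound hmeas C ?_
  filter_upwards [ae_mem_unitDisc] with w hw
  exact hC w (ball_subset_closedBall hw)

/-- Constructor for elements of the Bergman space from holomorphic functions that are
continuous up to the boundary. -/
def toA2 (f : ℂ → ℂ) (hd : DifferentiableOn ℂ f unitDisc)
    (hc : ContinuousOn f (Metric.closedBall (0 : ℂ) 1)) : A2 :=
  ⟨(memLp_of_contOn hc).toLp f, ⟨f, hd, MemLp.coeFn_toLp _⟩⟩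

/-- The standard orthonormal basis `e_k(w) = √(k+1) wᵏ` of the Bergman space. -/
def ek (k : ℕ) : A2 :=
  toA2 (fun w => (Real.sqrt (k + 1) : ℂ) * w ^ k)
    ((differentiableOn_const _).mul (differentiableOn_id.pow k))
    (continuousOn_const.mul (continuousOn_id.pow k))

/-- The element `U_z e_k` of the Bergman space (junk value `0` if `z ∉ 𝔻`). -/
def Uek (z : ℂ) (k : ℕ) : A2 :=
  if hz : ‖z‖ < 1 then
    toA2 (UekFun k z) (uekFun_diffOn k hz) (uekFun_contOn k hz)
  else 0

/-- The `n`-Berezin transform of a bounded operator `Q` on the Bergman space. -/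
def berezin (n : ℕ) (Q : A2 →L[ℂ] A2) : ℂ → ℂ := fun z =>
  ((n : ℂ) + 1) * ∑ j ∈ Finset.range (n + 1),
    ((n.choose j : ℂ)) * ((-1 : ℂ) ^ j / ((j : ℂ) + 1)) * pin (Q (Uek z j)) (Uek z j)

/-- The integrand in the weak definition of `T^{(k)}`:
`z ↦ ⟨f, U_z e_k⟩ ⟨U_z e_k, g⟩ (1-|z|²)⁻²`. -/
def toepKernel (k : ℕ) (f g : A2) (z : ℂ) : ℂ :=
  pin f (Uek z k) * pin (Uek z k) g * (((1 - ‖z‖ ^ 2) ^ 2 : ℝ) : ℂ)⁻¹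

/-- `T` is the generalized Toeplitz operator `T_μ^{(k)}` of a positive measure `μ`:
the defining integral converges in the weak operator topology and represents the
sesquilinear form of `T`. -/
def IsToepM (μ : Measure ℂ) (k : ℕ) (T : A2 →L[ℂ] A2) : Prop :=
  ∀ f g : A2, Integrable (toepKernel k f g) μ ∧
    pin (T f) g = ∫ z, toepKernel k f g z ∂μ

/-- `T` is the generalized Toeplitz operator `T_a^{(k)}` with symbol function `a`;
`T_a^{(0)} = T_a` is the classical Toeplitz operator. -/
def IsToepFn (a : ℂ → ℂ) (k : ℕ) (T : A2 →L[ℂ] A2) : Prop :=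
  ∀ f g : A2, Integrable (fun z => a z * toepKernel k f g z) dA ∧
    pin (T f) g = ∫ z, a z * toepKernel k f g z ∂dA

/-- Integral of a function against a complex measure, via the Jordan decompositions of
its real and imaginary parts. -/
def cInt (μ : ComplexMeasure ℂ) (f : ℂ → ℂ) : ℂ :=
  ((∫ z, f z ∂(ComplexMeasure.re μ).toJordanDecomposition.posPart) -
    (∫ z, f z ∂(ComplexMeasure.re μ).toJordanDecomposition.negPart)) +
  Complex.I * ((∫ z, f z ∂(ComplexMeasure.im μ).toJordanDecomposition.posPart) -
    (∫ z, f z ∂(ComplexMeasure.im μ).toJordanDecomposition.negPart))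

/-- Integrability with respect to a complex measure. -/
def cIntegrable (μ : ComplexMeasure ℂ) (f : ℂ → ℂ) : Prop :=
  Integrable f (ComplexMeasure.re μ).toJordanDecomposition.posPart ∧
  Integrable f (ComplexMeasure.re μ).toJordanDecomposition.negPart ∧
  Integrable f (ComplexMeasure.im μ).toJordanDecomposition.posPart ∧
  Integrable f (ComplexMeasure.im μ).toJordanDecomposition.negPart

/-- The total variation of a complex measure (equivalent, with two-sided bounds, to `|μ|`). -/
def cVariation (μ : ComplexMeasure ℂ) : Measure ℂ :=
  (ComplexMeasure.re μ).totalVariation + (ComplexMeasure.im μ).totalVariation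

/-- `T` is the generalized Toeplitz operator `T_μ^{(k)}` of a complex measure `μ`. -/
def IsToepC (μ : ComplexMeasure ℂ) (k : ℕ) (T : A2 →L[ℂ] A2) : Prop :=
  ∀ f g : A2, cIntegrable μ (toepKernel k f g) ∧
    pin (T f) g = cInt μ (toepKernel k f g)

/-- The `n`-Berezin transform `B_n(μ)` of a complex measure. -/
def berezinC (n : ℕ) (μ : ComplexMeasure ℂ) : ℂ → ℂ := fun z =>
  cInt μ (fun ζ => ((((n : ℝ) + 1) * (1 - ‖mobius z ζ‖ ^ 2) ^ (n + 2) *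
    (((1 - ‖ζ‖ ^ 2) ^ 2))⁻¹ : ℝ) : ℂ))

/-- The Wirtinger derivative `∂`. -/
def wirtD (f : ℂ → ℂ) (z : ℂ) : ℂ :=
  (fderiv ℝ f z 1 - Complex.I * fderiv ℝ f z Complex.I) / 2

/-- The Wirtinger derivative `∂̄`. -/
def wirtDbar (f : ℂ → ℂ) (z : ℂ) : ℂ :=
  (fderiv ℝ f z 1 + Complex.I * fderiv ℝ f z Complex.I) / 2

/-- The invariant Laplacian `Δ̃ = (1-|z|²)² ∂∂̄`. -/
def invLap (f : ℂ → ℂ) : ℂ → ℂ := fun z =>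
  (((1 - ‖z‖ ^ 2) ^ 2 : ℝ) : ℂ) * wirtD (wirtDbar f) z

/-- `T = Δ̃ S` in the sense of the domain `𝔇`: `Δ̃ B₀(S) = B₀(T)` on the disc.
Membership `S ∈ 𝔇` is `∃ T, IsLap S T` (such `T` is unique since `B₀` is injective). -/
def IsLap (S T : A2 →L[ℂ] A2) : Prop :=
  ∀ z ∈ unitDisc, invLap (berezin 0 S) z = berezin 0 T z

/-- The Berezin transform `B₀(μ)` of a positive measure, as an `ℝ≥0∞`-valued function. -/
def ber0M (μ : Measure ℂ) (z : ℂ) : ℝ≥0∞ :=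
  ∫⁻ ζ, ENNReal.ofReal ((1 - ‖mobius z ζ‖ ^ 2) ^ 2 *
    (((1 - ‖ζ‖ ^ 2) ^ 2))⁻¹) ∂μ

/-- `‖B₀(μ)‖_∞` as an `ℝ≥0∞` quantity. -/
def ber0Norm (μ : Measure ℂ) : ℝ≥0∞ := ⨆ z ∈ unitDisc, ber0M μ z

/-- A positive measure is Carleson iff `‖B₀(μ)‖_∞ < ∞`. -/
def IsCarleson (μ : Measure ℂ) : Prop := ber0Norm μ ≠ ⊤

/-- A positive measure is a vanishing Carleson measure iff `B₀(μ)(z) → 0` as `|z| → 1`. -/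
def IsVanishingCarleson (μ : Measure ℂ) : Prop :=
  ∀ ε : ℝ, 0 < ε → ∃ r : ℝ, 0 ≤ r ∧ r < 1 ∧
    ∀ z ∈ unitDisc, r < ‖z‖ → ber0M μ z < ENNReal.ofReal ε

/-- The pseudo-hyperbolic distance. -/
def pseudoDist (z w : ℂ) : ℝ := ‖mobius z w‖

/-- The hyperbolic distance `β`. -/
def hypDist (z w : ℂ) : ℝ :=
  Real.log ((1 + pseudoDist z w) / (1 - pseudoDist z w))

/-- The pseudo-hyperbolic disc `D(v, r)`. -/
def pDisc (v : ℂ) (r : ℝ) : Set ℂ := {z ∈ unitDisc | ‖mobius v z‖ ≤ r}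

/-!
The reproducing formula `∫ (1 - z w̄)⁻² f(w) dA(w) = f(z)` is proved in polar coordinates: on the
circle `|w| = r` one has `w̄ = r²/w`, so the angular integral is the Cauchy integral
`2π (w f)′(z r²)`, and `∫₀¹ 2r (w f)′(z r²) dr = [r² f(z r²)]₀¹ = f(z)`. Since
`U_z e₀ = φ_z′ = -(1 - |z|²)(1 - w z̄)⁻²`, this gives `⟨f, U_z e₀⟩ = -(1 - |z|²) f(z)`, hence
`B₀(f ⊗ g)(z) = (1 - |z|²)² f(z) conj (g(z))`. The theorem is then the Wirtinger-calculus identity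
`Δ̃[(1 - |z|²)² f ḡ] = (1 - |z|²)² (f′ ḡ′ + (z²f)′ conj (z²g)′ - 2 (zf)′ conj (zg)′)`
combined with the linearity of `B₀`.
-/

open Real Topology

lemma polarCoord_symm_eq_circleMap (p : ℝ × ℝ) :
    Complex.polarCoord.symm p = circleMap 0 p.1 p.2 := by
  rw [Complex.polarCoord_symm_apply, circleMap, Complex.exp_mul_I]
  push_cast [Complex.ofReal_cos, Complex.ofReal_sin]
  ring

lemma setIntegral_ball_eq_setIntegral_polarCoord {E : Type*} [NormedAddCommGroup E]
    [NormedSpace ℝ E] (ρ : ℝ) (F : ℂ → E) :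
    ∫ w in ball (0 : ℂ) ρ, F w
      = ∫ p in Set.Ioo 0 ρ ×ˢ Set.Ioo (-π) π, p.1 • F (circleMap 0 p.1 p.2) := by
  have hball_iff : ∀ p ∈ polarCoord.target,
      circleMap 0 p.1 p.2 ∈ ball (0 : ℂ) ρ ↔ p ∈ Set.Ioo 0 ρ ×ˢ Set.Ioo (-π) π := by
    rintro ⟨r, θ⟩ ⟨hr, hθ⟩
    simp [mem_ball, abs_of_pos (show 0 < r from hr), hθ, show 0 < r from hr]
  rw [← integral_indicator measurableSet_ball, ← Complex.integral_comp_polarCoord_symm]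
  refine (setIntegral_eq_of_subset_of_forall_sdiff_eq_zero (s := Set.Ioo 0 ρ ×ˢ Set.Ioo (-π) π)
    (measurableSet_Ioi.prod measurableSet_Ioo) ?_ ?_).trans ?_
  · rintro ⟨r, θ⟩ ⟨hr, hθ⟩
    exact ⟨hr.1, hθ⟩
  · rintro p ⟨hp, hps⟩
    rw [polarCoord_symm_eq_circleMap, Set.indicator_of_notMem (mt (hball_iff p hp).1 hps),
      smul_zero]
  · refine setIntegral_congr_fun (measurableSet_Ioo.prod measurableSet_Ioo) fun p hp => ?_
    rw [polarCoord_symm_eq_circleMap,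
      Set.indicator_of_mem ((hball_iff p ⟨hp.1.1, hp.2⟩).2 hp)]

theorem setIntegral_ball_eq_integral_circleMap {E : Type*} [NormedAddCommGroup E]
    [NormedSpace ℝ E] {ρ : ℝ} (hρ : 0 ≤ ρ) {F : ℂ → E}
    (hF : ContinuousOn F (closedBall 0 ρ)) :
    ∫ w in ball (0 : ℂ) ρ, F w = ∫ r in (0)..ρ, r • ∫ θ in (0)..(2 * π), F (circleMap 0 r θ) := by
  have hint : IntegrableOn (fun p : ℝ × ℝ => p.1 • F (circleMap 0 p.1 p.2))
      (Set.Ioo 0 ρ ×ˢ Set.Ioo (-π) π) := by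
    have hcirc : Continuous fun p : ℝ × ℝ => circleMap 0 p.1 p.2 := by
      simp only [circleMap, zero_add]
      fun_prop
    have hmaps : Set.MapsTo (fun p : ℝ × ℝ => circleMap 0 p.1 p.2)
        (Set.Icc 0 ρ ×ˢ Set.Icc (-π) π) (closedBall 0 ρ) := by
      rintro ⟨r, θ⟩ ⟨hr, -⟩
      simp [abs_of_nonneg hr.1, hr.2]
    refine ((continuous_fst.continuousOn.smul (hF.comp hcirc.continuousOn hmaps)
      ).integrableOn_compact (isCompact_Icc.prod isCompact_Icc)).mono_set ?_
    exact Set.prod_mono Set.Ioo_subset_Icc_self Set.Ioo_subset_Icc_self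
  have hperiod : ∀ r : ℝ, ∫ θ in Set.Ioo (-π) π, F (circleMap 0 r θ)
      = ∫ θ in (0)..(2 * π), F (circleMap 0 r θ) := fun r => by
    have h := ((periodic_circleMap 0 r).comp F).intervalIntegral_add_eq (-π) 0
    rw [show -π + 2 * π = π by ring, zero_add] at h
    rw [← integral_Ioc_eq_integral_Ioo, ← intervalIntegral.integral_of_le (by linarith [pi_pos])]
    exact h
  rw [setIntegral_ball_eq_setIntegral_polarCoord, Measure.volume_eq_prod, ← Measure.prod_restrict,
    integral_prod _ (by rwa [Measure.prod_restrict, ← Measure.volume_eq_prod]),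
    intervalIntegral.integral_of_le hρ, integral_Ioc_eq_integral_Ioo]
  simp only [integral_smul, hperiod]

lemma conj_circleMap_mul_self {r : ℝ} (θ : ℝ) :
    (starRingEnd ℂ) (circleMap 0 r θ) * circleMap 0 r θ = (r : ℂ) ^ 2 := by
  rw [Complex.conj_mul', norm_circleMap_zero]
  norm_cast
  exact sq_abs r

theorem integral_circleMap_bergmanKernel_mul {U : Set ℂ} (hU : IsOpen U) {f : ℂ → ℂ}
    (hf : DifferentiableOn ℂ f U) {r : ℝ} (hr : 0 < r) (hrU : closedBall 0 r ⊆ U) {z : ℂ}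
    (hz : ‖z‖ * r < 1) :
    ∫ θ in (0)..(2 * π), ((1 - z * (starRingEnd ℂ) (circleMap 0 r θ)) ^ 2)⁻¹ * f (circleMap 0 r θ)
      = 2 * π * deriv (fun w => w * f w) (z * r ^ 2) := by
  have hz₀ : z * r ^ 2 ∈ ball (0 : ℂ) r := by
    rw [mem_ball_zero_iff, norm_mul, norm_pow, Complex.norm_real, Real.norm_of_nonneg hr.le]
    nlinarith
  have hmul : DifferentiableOn ℂ (fun w => w * f w) U := differentiableOn_id.mul hf
  have hcauchy := two_pi_I_inv_smul_circleIntegral_sub_sq_inv_smul_of_differentiable hU hrU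
    hmul hz₀
  have hintegrand : ∀ θ : ℝ, deriv (circleMap 0 r) θ •
      (((circleMap 0 r θ - z * r ^ 2) ^ 2)⁻¹ • (circleMap 0 r θ * f (circleMap 0 r θ)))
      = Complex.I * (((1 - z * (starRingEnd ℂ) (circleMap 0 r θ)) ^ 2)⁻¹ *
        f (circleMap 0 r θ)) := fun θ => by
    have hw : circleMap 0 r θ ≠ 0 := circleMap_ne_center hr.ne'
    have hconj : (starRingEnd ℂ) (circleMap 0 r θ) = r ^ 2 / circleMap 0 r θ := by
      rw [eq_div_iff hw, conj_circleMap_mul_self]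
    rw [deriv_circleMap, hconj, smul_eq_mul, smul_eq_mul]
    field_simp
  simp only [circleIntegral, hintegrand] at hcauchy
  rw [intervalIntegral.integral_const_mul, smul_eq_mul] at hcauchy
  have hI : (2 * π * Complex.I : ℂ) ≠ 0 := by simp [pi_ne_zero]
  rw [inv_mul_eq_iff_eq_mul₀ hI] at hcauchy
  apply mul_left_cancel₀ Complex.I_ne_zero
  rw [hcauchy]
  ring

theorem intervalIntegral_deriv_id_mul_comp_sq {f : ℂ → ℂ} (hf : DifferentiableOn ℂ f (ball 0 1))
    {z : ℂ} (hz : ‖z‖ < 1) :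
    ∫ r in (0 : ℝ)..1, 2 * r * deriv (fun w => w * f w) (z * r ^ 2) = f z := by
  have hmaps : Set.MapsTo (fun r : ℝ => z * (r : ℂ) ^ 2) (Set.uIcc 0 1) (ball 0 1) := by
    intro r hr
    rw [Set.uIcc_of_le zero_le_one] at hr
    rw [mem_ball_zero_iff, norm_mul, norm_pow, Complex.norm_real, Real.norm_of_nonneg hr.1]
    calc ‖z‖ * r ^ 2 ≤ ‖z‖ * 1 := by gcongr; exact pow_le_one₀ hr.1 hr.2
      _ < 1 := by rwa [mul_one]
  have hmul : DifferentiableOn ℂ (fun w => w * f w) (ball 0 1) := differentiableOn_id.mul hf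
  have hG : ∀ r ∈ Set.uIcc (0 : ℝ) 1, HasDerivAt (fun r : ℝ => (r : ℂ) ^ 2 * f (z * r ^ 2))
      (2 * r * deriv (fun w => w * f w) (z * r ^ 2)) r := fun r hr => by
    have hfr := (hf.differentiableAt (isOpen_ball.mem_nhds (hmaps hr))).hasDerivAt
    have hsq : HasDerivAt (fun r : ℝ => (r : ℂ) ^ 2) (2 * r) r := by
      simpa using (hasDerivAt_pow 2 r).ofReal_comp
    rw [((hasDerivAt_id' _).fun_mul hfr).deriv]
    refine (hsq.fun_mul (hfr.comp r (hsq.const_mul z))).congr_deriv ?_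
    simp only [Function.comp_apply]
    ring
  have hcont : ContinuousOn (fun r : ℝ => 2 * r * deriv (fun w => w * f w) (z * r ^ 2))
      (Set.uIcc 0 1) :=
    (by fun_prop : Continuous fun r : ℝ => 2 * (r : ℂ)).continuousOn.mul
      ((hmul.deriv isOpen_ball).continuousOn.comp (by fun_prop) hmaps)
  rw [intervalIntegral.integral_eq_sub_of_hasDerivAt hG hcont.intervalIntegrable]
  simp

theorem integral_bergmanKernel_mul {f : ℂ → ℂ} (hf : DiffContOnCl ℂ f (ball 0 1)) {z : ℂ}
    (hz : ‖z‖ < 1) :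
    ∫ w, ((1 - z * (starRingEnd ℂ) w) ^ 2)⁻¹ * f w ∂dA = f z := by
  have hdiff : DifferentiableOn ℂ f (ball 0 1) := hf.differentiableOn
  have hkernel : ContinuousOn (fun w => ((1 - z * (starRingEnd ℂ) w) ^ 2)⁻¹ * f w)
      (closedBall 0 1) := by
    refine (((continuousOn_const.sub (continuousOn_const.mul
      Complex.continuous_conj.continuousOn)).pow 2).inv₀ (fun w hw => ?_)).mul ?_
    · have h := denom_ne hz hw
      rw [← map_ne_zero (starRingEnd ℂ)] at h
      simpa using h
    · simpa [closure_ball] using hf.continuousOn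
  have hradial : ∀ᵐ r ∂volume, r ∈ Set.uIoc (0 : ℝ) 1 →
      r • ∫ θ in (0)..(2 * π), ((1 - z * (starRingEnd ℂ) (circleMap 0 r θ)) ^ 2)⁻¹ *
        f (circleMap 0 r θ) = π * (2 * r * deriv (fun w => w * f w) (z * r ^ 2)) := by
    filter_upwards [Measure.ae_ne volume 1] with r hr₁ hr
    rw [Set.uIoc_of_le zero_le_one] at hr
    rw [integral_circleMap_bergmanKernel_mul isOpen_ball hdiff hr.1
      (closedBall_subset_ball (lt_of_le_of_ne hr.2 hr₁))
      (mul_lt_one_of_nonneg_of_lt_one_left (norm_nonneg z) hz hr.2), Complex.real_smul]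
    ring
  have hπ : (π : ℂ) ≠ 0 := by exact_mod_cast pi_ne_zero
  rw [dA, integral_smul_measure, unitDisc, setIntegral_ball_eq_integral_circleMap zero_le_one
    hkernel, intervalIntegral.integral_congr_ae hradial, intervalIntegral.integral_const_mul,
    intervalIntegral_deriv_id_mul_comp_sq hdiff hz, ENNReal.toReal_inv,
    ENNReal.toReal_ofReal pi_pos.le, Complex.real_smul, Complex.ofReal_inv, inv_mul_cancel_left₀ hπ]

lemma coeFn_Uek_zero {z : ℂ} (hz : ‖z‖ < 1) :
    (↑↑((Uek z 0 : A2) : Lp ℂ 2 dA) : ℂ → ℂ) =ᵐ[dA] mderiv z := by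
  rw [Uek, dif_pos hz]
  refine (MemLp.coeFn_toLp (memLp_of_contOn (uekFun_contOn 0 hz))).trans (.of_eq ?_)
  funext w
  simp [UekFun]

lemma pin_eq_integral (F G : A2) :
    pin F G = ∫ w, (starRingEnd ℂ) ((G : Lp ℂ 2 dA) w) * (F : Lp ℂ 2 dA) w ∂dA := by
  rw [pin, Submodule.coe_inner, L2.inner_def]
  simp only [RCLike.inner_apply, mul_comm]

lemma pin_Uek_zero {f : ℂ → ℂ} (hf : DiffContOnCl ℂ f (ball 0 1)) {F : A2}
    (hF : (↑↑(F : Lp ℂ 2 dA) : ℂ → ℂ) =ᵐ[dA] f) {z : ℂ} (hz : ‖z‖ < 1) :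
    pin F (Uek z 0) = -((1 - ‖z‖ ^ 2 : ℝ) : ℂ) * f z := by
  have hconj : ∀ w, (starRingEnd ℂ) (mderiv z w)
      = -((1 - ‖z‖ ^ 2 : ℝ) : ℂ) * ((1 - z * (starRingEnd ℂ) w) ^ 2)⁻¹ := fun w => by
    simp [mderiv, div_eq_mul_inv]
  rw [pin_eq_integral, ← integral_bergmanKernel_mul hf hz, ← integral_const_mul]
  refine integral_congr_ae ?_
  filter_upwards [coeFn_Uek_zero hz, hF] with w hU hFw
  rw [hU, hFw, hconj, mul_assoc]

lemma berezin_zero_apply (Q : A2 →L[ℂ] A2) (z : ℂ) :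
    berezin 0 Q z = pin (Q (Uek z 0)) (Uek z 0) := by
  simp [berezin]

lemma berezin_zero_add (P Q : A2 →L[ℂ] A2) (z : ℂ) :
    berezin 0 (P + Q) z = berezin 0 P z + berezin 0 Q z := by
  simp only [berezin_zero_apply, pin, add_apply, inner_add_right]

lemma berezin_zero_sub (P Q : A2 →L[ℂ] A2) (z : ℂ) :
    berezin 0 (P - Q) z = berezin 0 P z - berezin 0 Q z := by
  simp only [berezin_zero_apply, pin, sub_apply, inner_sub_right]

lemma berezin_zero_smul (c : ℂ) (Q : A2 →L[ℂ] A2) (z : ℂ) :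
    berezin 0 (c • Q) z = c * berezin 0 Q z := by
  simp only [berezin_zero_apply, pin, smul_apply]
  exact inner_smul_right (𝕜 := ℂ) (Uek z 0) (Q (Uek z 0)) c

theorem berezin_zero_rankOne {f g : ℂ → ℂ} (hf : DiffContOnCl ℂ f (ball 0 1))
    (hg : DiffContOnCl ℂ g (ball 0 1)) {F G : A2}
    (hF : (↑↑(F : Lp ℂ 2 dA) : ℂ → ℂ) =ᵐ[dA] f) (hG : (↑↑(G : Lp ℂ 2 dA) : ℂ → ℂ) =ᵐ[dA] g)
    {z : ℂ} (hz : ‖z‖ < 1) :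
    berezin 0 (rankOne F G) z = (((1 - ‖z‖ ^ 2) ^ 2 : ℝ) : ℂ) * (f z * (starRingEnd ℂ) (g z)) := by
  have hG' : pin (Uek z 0) G = (starRingEnd ℂ) (pin G (Uek z 0)) :=
    (inner_conj_symm (𝕜 := ℂ) G (Uek z 0)).symm
  rw [berezin_zero_apply, rankOne, ContinuousLinearMap.smulRight_apply, innerSL_apply_apply, pin,
    inner_smul_right, ← pin, ← pin, hG', pin_Uek_zero hf hF hz, pin_Uek_zero hg hG hz]
  simp only [map_mul, map_neg, Complex.conj_ofReal]
  push_cast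
  ring

/-- `a` and `b` are the Wirtinger derivatives `∂m(z)` and `∂̄m(z)`. -/
def HasWirtDerivAt (m : ℂ → ℂ) (a b z : ℂ) : Prop :=
  HasFDerivAt m (a • (1 : ℂ →L[ℝ] ℂ) + b • (Complex.conjCLE : ℂ →L[ℝ] ℂ)) z

namespace HasWirtDerivAt

variable {m n : ℂ → ℂ} {a b c d z : ℂ}

lemma wirtD_eq (h : HasWirtDerivAt m a b z) : wirtD m z = a := by
  rw [wirtD, h.fderiv]
  simp only [add_apply, smul_apply, one_apply_eq_self, ContinuousLinearEquiv.coe_coe,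
    Complex.conjCLE_apply, map_one, Complex.conj_I, smul_eq_mul]
  ring_nf
  rw [Complex.I_sq]
  ring

lemma wirtDbar_eq (h : HasWirtDerivAt m a b z) : wirtDbar m z = b := by
  rw [wirtDbar, h.fderiv]
  simp only [add_apply, smul_apply, one_apply_eq_self, ContinuousLinearEquiv.coe_coe,
    Complex.conjCLE_apply, map_one, Complex.conj_I, smul_eq_mul]
  ring_nf
  rw [Complex.I_sq]
  ring

lemma add (hm : HasWirtDerivAt m a b z) (hn : HasWirtDerivAt n c d z) :
    HasWirtDerivAt (fun w => m w + n w) (a + c) (b + d) z :=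
  (HasFDerivAt.fun_add hm hn).congr_fderiv (by module)

lemma sub (hm : HasWirtDerivAt m a b z) (hn : HasWirtDerivAt n c d z) :
    HasWirtDerivAt (fun w => m w - n w) (a - c) (b - d) z :=
  (HasFDerivAt.fun_sub hm hn).congr_fderiv (by module)

lemma mul (hm : HasWirtDerivAt m a b z) (hn : HasWirtDerivAt n c d z) :
    HasWirtDerivAt (fun w => m w * n w) (a * n z + m z * c) (b * n z + m z * d) z := by
  refine (HasFDerivAt.fun_mul hm hn).congr_fderiv ?_
  ext w
  simp
  ring

end HasWirtDerivAt

lemma hasWirtDerivAt_const (c z : ℂ) : HasWirtDerivAt (fun _ => c) 0 0 z := by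
  unfold HasWirtDerivAt
  convert hasFDerivAt_const (𝕜 := ℝ) c z
  ext w
  simp

lemma _root_.HasDerivAt.hasWirtDerivAt {f : ℂ → ℂ} {d z : ℂ} (h : HasDerivAt f d z) :
    HasWirtDerivAt f d 0 z := by
  refine (h.hasFDerivAt.restrictScalars ℝ).congr_fderiv ?_
  ext w
  simp [mul_comm]

lemma _root_.HasDerivAt.hasWirtDerivAt_conj {f : ℂ → ℂ} {d z : ℂ} (h : HasDerivAt f d z) :
    HasWirtDerivAt (fun w => (starRingEnd ℂ) (f w)) 0 ((starRingEnd ℂ) d) z := by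
  refine ((Complex.conjCLE : ℂ →L[ℝ] ℂ).hasFDerivAt.comp z
    (h.hasFDerivAt.restrictScalars ℝ)).congr_fderiv ?_
  ext w
  simp [mul_comm]

lemma hasWirtDerivAt_one_sub_mul_conj (z : ℂ) :
    HasWirtDerivAt (fun w => 1 - w * (starRingEnd ℂ) w) (-(starRingEnd ℂ) z) (-z) z := by
  have hid : HasDerivAt (fun w : ℂ => w) 1 z := hasDerivAt_id' z
  convert (hasWirtDerivAt_const 1 z).sub (hid.hasWirtDerivAt.mul hid.hasWirtDerivAt_conj)
    using 1 <;> simp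

lemma _root_.Filter.EventuallyEq.wirtD_eq {u v : ℂ → ℂ} {z : ℂ} (h : u =ᶠ[𝓝 z] v) :
    wirtD u z = wirtD v z := by
  rw [wirtD, wirtD, h.fderiv_eq]

lemma _root_.Filter.EventuallyEq.invLap_eq {u v : ℂ → ℂ} {z : ℂ} (h : u =ᶠ[𝓝 z] v) :
    invLap u z = invLap v z := by
  rw [invLap, invLap]
  congr 1
  refine _root_.Filter.EventuallyEq.wirtD_eq ?_
  filter_upwards [h.eventuallyEq_nhds] with y hy
  rw [wirtDbar, wirtDbar, hy.fderiv_eq]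

theorem invLap_weight_mul_conj {U : Set ℂ} (hU : IsOpen U) {f g : ℂ → ℂ}
    (hf : DifferentiableOn ℂ f U) (hg : DifferentiableOn ℂ g U) {z : ℂ} (hz : z ∈ U) :
    invLap (fun w => (((1 - ‖w‖ ^ 2) ^ 2 : ℝ) : ℂ) * (f w * (starRingEnd ℂ) (g w))) z
      = (((1 - ‖z‖ ^ 2) ^ 2 : ℝ) : ℂ) *
        (deriv f z * (starRingEnd ℂ) (deriv g z)
          + deriv (fun w => w ^ 2 * f w) z * (starRingEnd ℂ) (deriv (fun w => w ^ 2 * g w) z)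
          - 2 * (deriv (fun w => w * f w) z * (starRingEnd ℂ) (deriv (fun w => w * g w) z))) := by
  set P : ℂ → ℂ := fun w => 1 - w * (starRingEnd ℂ) w
  have hid : HasDerivAt (fun w : ℂ => w) 1 z := hasDerivAt_id' z
  have hP := hasWirtDerivAt_one_sub_mul_conj
  have hdf : ∀ y ∈ U, HasDerivAt f (deriv f y) y := fun y hy =>
    (hf.differentiableAt (hU.mem_nhds hy)).hasDerivAt
  have hdg : ∀ y ∈ U, HasDerivAt g (deriv g y) y := fun y hy =>
    (hg.differentiableAt (hU.mem_nhds hy)).hasDerivAt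
  set Q : ℂ → ℂ := fun y => -2 * y * P y * (f y * (starRingEnd ℂ) (g y))
    + P y * P y * (f y * (starRingEnd ℂ) (deriv g y))
  have hweight : (fun w => (((1 - ‖w‖ ^ 2) ^ 2 : ℝ) : ℂ) * (f w * (starRingEnd ℂ) (g w)))
      = fun w => P w * P w * (f w * (starRingEnd ℂ) (g w)) := by
    funext w
    simp only [P, Complex.mul_conj']
    push_cast
    ring
  have hdbar : wirtDbar (fun w => P w * P w * (f w * (starRingEnd ℂ) (g w))) =ᶠ[𝓝 z] Q := by
    filter_upwards [hU.mem_nhds hz] with y hy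
    rw [(((hP y).mul (hP y)).mul
      ((hdf y hy).hasWirtDerivAt.mul (hdg y hy).hasWirtDerivAt_conj)).wirtDbar_eq]
    ring
  have hdg' : HasDerivAt (deriv g) (deriv (deriv g) z) z :=
    ((hg.deriv hU).differentiableAt (hU.mem_nhds hz)).hasDerivAt
  have hQ : HasWirtDerivAt Q _ _ z :=
    ((((hasWirtDerivAt_const (-2) z).mul hid.hasWirtDerivAt).mul (hP z)).mul
        ((hdf z hz).hasWirtDerivAt.mul (hdg z hz).hasWirtDerivAt_conj)).add
      (((hP z).mul (hP z)).mul ((hdf z hz).hasWirtDerivAt.mul hdg'.hasWirtDerivAt_conj))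
  rw [hweight, invLap, hdbar.wirtD_eq, hQ.wirtD_eq,
    ((hasDerivAt_pow 2 z).fun_mul (hdf z hz)).deriv,
    ((hasDerivAt_pow 2 z).fun_mul (hdg z hz)).deriv,
    (hid.fun_mul (hdf z hz)).deriv, (hid.fun_mul (hdg z hz)).deriv]
  push_cast
  simp only [map_add, map_mul, map_pow, map_one, map_ofNat, ← Complex.mul_conj']
  ring

lemma _root_.DifferentiableOn.diffContOnCl_ball_one {U : Set ℂ} {h : ℂ → ℂ}
    (hh : DifferentiableOn ℂ h U) (hU : closedBall 0 1 ⊆ U) : DiffContOnCl ℂ h (ball 0 1) :=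
  (hh.mono (by rwa [closure_ball 0 one_ne_zero])).diffContOnCl

/-- If `f, g` are holomorphic on a neighborhood of the closed unit disc,
then the rank-one operator `f ⊗ g` belongs to `𝔇` and
`Δ̃(f⊗g) = (f′⊗g′) + ((z²f)′⊗(z²g)′) − 2 (zf)′⊗(zg)′`. -/
theorem statement0 (f g : ℂ → ℂ)
    (hf : ∃ U : Set ℂ, IsOpen U ∧ Metric.closedBall (0 : ℂ) 1 ⊆ U ∧ DifferentiableOn ℂ f U)
    (hg : ∃ U : Set ℂ, IsOpen U ∧ Metric.closedBall (0 : ℂ) 1 ⊆ U ∧ DifferentiableOn ℂ g U)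
    (F G F₁ G₁ F₂ G₂ F₃ G₃ : A2)
    (hF : (↑↑(F : Lp ℂ 2 dA) : ℂ → ℂ) =ᵐ[dA] f)
    (hG : (↑↑(G : Lp ℂ 2 dA) : ℂ → ℂ) =ᵐ[dA] g)
    (hF₁ : (↑↑(F₁ : Lp ℂ 2 dA) : ℂ → ℂ) =ᵐ[dA] deriv f)
    (hG₁ : (↑↑(G₁ : Lp ℂ 2 dA) : ℂ → ℂ) =ᵐ[dA] deriv g)
    (hF₂ : (↑↑(F₂ : Lp ℂ 2 dA) : ℂ → ℂ) =ᵐ[dA] deriv (fun w => w ^ 2 * f w))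
    (hG₂ : (↑↑(G₂ : Lp ℂ 2 dA) : ℂ → ℂ) =ᵐ[dA] deriv (fun w => w ^ 2 * g w))
    (hF₃ : (↑↑(F₃ : Lp ℂ 2 dA) : ℂ → ℂ) =ᵐ[dA] deriv (fun w => w * f w))
    (hG₃ : (↑↑(G₃ : Lp ℂ 2 dA) : ℂ → ℂ) =ᵐ[dA] deriv (fun w => w * g w)) :
    IsLap (rankOne F G)
      (rankOne F₁ G₁ + rankOne F₂ G₂ - (2 : ℂ) • rankOne F₃ G₃) := by
  obtain ⟨Uf, hUf, hsubf, hf⟩ := hf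
  obtain ⟨Ug, hUg, hsubg, hg⟩ := hg
  have hf₂ : DifferentiableOn ℂ (fun w => w ^ 2 * f w) Uf := (differentiableOn_id.pow 2).mul hf
  have hg₂ : DifferentiableOn ℂ (fun w => w ^ 2 * g w) Ug := (differentiableOn_id.pow 2).mul hg
  have hf₃ : DifferentiableOn ℂ (fun w => w * f w) Uf := differentiableOn_id.mul hf
  have hg₃ : DifferentiableOn ℂ (fun w => w * g w) Ug := differentiableOn_id.mul hg
  intro z hz
  have hB : berezin 0 (rankOne F G) =ᶠ[𝓝 z]
      fun w => (((1 - ‖w‖ ^ 2) ^ 2 : ℝ) : ℂ) * (f w * (starRingEnd ℂ) (g w)) := by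
    filter_upwards [isOpen_ball.mem_nhds hz] with w hw
    exact berezin_zero_rankOne (hf.diffContOnCl_ball_one hsubf) (hg.diffContOnCl_ball_one hsubg)
      hF hG (mem_ball_zero_iff.mp hw)
  have hz₁ : ‖z‖ < 1 := mem_ball_zero_iff.mp hz
  rw [hB.invLap_eq, invLap_weight_mul_conj isOpen_ball (hf.mono (ball_subset_closedBall.trans hsubf))
    (hg.mono (ball_subset_closedBall.trans hsubg)) hz, berezin_zero_sub, berezin_zero_add,
    berezin_zero_smul,
    berezin_zero_rankOne ((hf.deriv hUf).diffContOnCl_ball_one hsubf)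
      ((hg.deriv hUg).diffContOnCl_ball_one hsubg) hF₁ hG₁ hz₁,
    berezin_zero_rankOne ((hf₂.deriv hUf).diffContOnCl_ball_one hsubf)
      ((hg₂.deriv hUg).diffContOnCl_ball_one hsubg) hF₂ hG₂ hz₁,
    berezin_zero_rankOne ((hf₃.deriv hUf).diffContOnCl_ball_one hsubf)
      ((hg₃.deriv hUg).diffContOnCl_ball_one hsubg) hF₃ hG₃ hz₁]
  ring

end Bergman
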